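/- For every ε > 0 there exists a sequence (Δₙ) of Delzant polygons such that λ(Δₙ Δ [0,1]²) ≤ ε for every n, the sequence is Cauchy for d, and no subsequence of (Δₙ) converges in d to a Delzant polygon: there is no strictly increasing sequence (n_k) and no Delzant polygon Δ with λ(Δ_{n_k} Δ Δ) → 0. (The space of Delzant polygons with the metric d is not locally compact.) -/

import Mathlib

open MeasureTheory Set Metric Filter

noncomputable section

abbrev Plane := EuclideanSpace ℝ (Fin 2)

/-- The real vector in the plane determined by an integer vector. -/
def vec (u : Fin 2 → ℤ) : Plane := WithLp.toLp 2 (fun i => (u i : ℝ))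

/-- A Delzant polygon: compact, convex, of positive Lebesgue measure, and at every
extreme point the polygon locally coincides with a cone spanned by a `ℤ`-basis of `ℤ²`. -/
def IsDelzant (Δ : Set Plane) : Prop :=
  IsCompact Δ ∧ Convex ℝ Δ ∧ 0 < volume Δ ∧
  ∀ v ∈ Δ.extremePoints ℝ, ∃ u₁ u₂ : Fin 2 → ℤ,
    LinearIndependent ℝ ![vec u₁, vec u₂] ∧
    (u₁ 0 * u₂ 1 - u₁ 1 * u₂ 0 = 1 ∨ u₁ 0 * u₂ 1 - u₁ 1 * u₂ 0 = -1) ∧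
    ∃ ε > (0:ℝ), Δ ∩ closedBall v ε =
      {x : Plane | ∃ t₁ t₂ : ℝ, 0 ≤ t₁ ∧ 0 ≤ t₂ ∧ x = v + t₁ • vec u₁ + t₂ • vec u₂}
        ∩ closedBall v ε

/-- The closed unit square $[0,1]^2$ in the plane. -/
def unitSquare : Set Plane :=
  {x : Plane | 0 ≤ x 0 ∧ x 0 ≤ 1 ∧ 0 ≤ x 1 ∧ x 1 ≤ 1}

/-
Cut the corner of the unit square at the origin by the lines `2x₀ + x₁ = c` and `x₀ + x₁ = b`,
with `0 < c < 1`. For `c/2 < b < c` the resulting hexagon is Delzant: at each of its six vertices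
the two edge vectors have determinant `±1`. As `b ↓ c/2` the hexagons converge in measure to the
pentagon cut by `2x₀ + x₁ = c` alone, whose vertex `(c/2, 0)` has edge vectors `(1, 0)` and
`(-1, 2)` of determinant `2`, so the pentagon is not Delzant. A limit in measure of a subsequence
agrees with the pentagon up to a null set, and closed convex bodies that agree up to a null set are
equal; so no subsequence converges to a Delzant polygon, although the sequence is Cauchy and, once
`c² ≤ ε`, stays `ε`-close to the square.
-/

open scoped symmDiff ENNReal
open Topology

section MeasureSymmDiff

variable {α : Type*} [MeasurableSpace α] {μ : Measure α}

lemma measure_symmDiff_eq_zero_of_tendsto {ι : Type*} {l : Filter ι} [l.NeBot] {s : ι → Set α}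
    {t t' : Set α} (ht : Tendsto (fun i => μ (s i ∆ t)) l (𝓝 0))
    (ht' : Tendsto (fun i => μ (s i ∆ t')) l (𝓝 0)) : μ (t ∆ t') = 0 := by
  have hsum : Tendsto (fun i => μ (s i ∆ t) + μ (s i ∆ t')) l (𝓝 0) := by
    simpa using ht.add ht'
  refine le_antisymm (ge_of_tendsto hsum (Eventually.of_forall fun i => ?_)) zero_le
  rw [symmDiff_comm (s i)]
  exact measure_symmDiff_le _ _ _

lemma exists_forall_measure_symmDiff_lt_of_tendsto {s : ℕ → Set α} {t : Set α}
    (ht : Tendsto (fun n => μ (s n ∆ t)) atTop (𝓝 0)) {δ : ℝ≥0∞} (hδ : 0 < δ) :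
    ∃ N, ∀ m n, N ≤ m → N ≤ n → μ (s m ∆ s n) < δ := by
  obtain ⟨N, hN⟩ := eventually_atTop.1 (ht.eventually (gt_mem_nhds (ENNReal.half_pos hδ.ne')))
  refine ⟨N, fun m n hm hn => ?_⟩
  calc μ (s m ∆ s n) ≤ μ (s m ∆ t) + μ (t ∆ s n) := measure_symmDiff_le _ _ _
    _ < δ / 2 + δ / 2 := by
      rw [symmDiff_comm t]
      exact ENNReal.add_lt_add (hN m hm) (hN n hn)
    _ = δ := ENNReal.add_halves δ

end MeasureSymmDiff

section ConvexBody

variable {E : Type*} [AddCommGroup E] [Module ℝ E] [TopologicalSpace E] [IsTopologicalAddGroup E]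
  [ContinuousSMul ℝ E] [MeasurableSpace E] {μ : Measure E} [μ.IsOpenPosMeasure] {s t : Set E}

lemma Convex.subset_of_measure_diff_eq_zero (hs : Convex ℝ s) (hs' : (interior s).Nonempty)
    (ht : IsClosed t) (h : μ (s \ t) = 0) : s ⊆ t := by
  have hint : interior s ⊆ t := by
    have hnull : μ (interior s \ t) = 0 :=
      measure_mono_null (sdiff_subset_sdiff_left interior_subset) h
    exact sdiff_eq_empty.1 ((isOpen_interior.sdiff ht).measure_eq_zero_iff μ |>.1 hnull)
  calc s ⊆ closure (interior s) := by
        rw [hs.closure_interior_eq_closure_of_nonempty_interior hs']; exact subset_closure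
    _ ⊆ t := closure_minimal hint ht

lemma Convex.eq_of_measure_symmDiff_eq_zero (hs : Convex ℝ s) (ht : Convex ℝ t)
    (hsc : IsClosed s) (htc : IsClosed t) (hs' : (interior s).Nonempty)
    (ht' : (interior t).Nonempty) (h : μ (s ∆ t) = 0) : s = t := by
  rw [Set.symmDiff_def, measure_union_null_iff] at h
  exact (Convex.subset_of_measure_diff_eq_zero hs hs' htc h.1).antisymm
    (Convex.subset_of_measure_diff_eq_zero ht ht' hsc h.2)

end ConvexBody

lemma Convex.interior_nonempty_of_measure_pos {E : Type*} [NormedAddCommGroup E]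
    [NormedSpace ℝ E] [MeasurableSpace E] [BorelSpace E] [FiniteDimensional ℝ E] {μ : Measure E}
    [μ.IsAddHaarMeasure] {s : Set E} (hs : Convex ℝ s) (h : 0 < μ s) : (interior s).Nonempty := by
  rw [hs.interior_nonempty_iff_affineSpan_eq_top]
  by_contra hspan
  exact h.ne' (measure_mono_null (subset_affineSpan ℝ s) (Measure.addHaar_affineSubspace μ _ hspan))

lemma eventuallyEq_of_inter_closedBall_eq {E : Type*} [PseudoMetricSpace E] {s t : Set E} {v : E}
    {ε : ℝ} (hε : 0 < ε) (h : s ∩ closedBall v ε = t ∩ closedBall v ε) : s =ᶠ[𝓝 v] t := by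
  filter_upwards [closedBall_mem_nhds v hε] with x hx
  exact propext ⟨fun hs => (h ▸ ⟨hs, hx⟩ : x ∈ t ∩ closedBall v ε).1,
    fun ht => (h.symm ▸ ⟨ht, hx⟩ : x ∈ s ∩ closedBall v ε).1⟩

lemma subset_of_eventuallyEq_of_cone {E : Type*} [AddCommGroup E] [Module ℝ E]
    [TopologicalSpace E] [IsTopologicalAddGroup E] [ContinuousSMul ℝ E] {K K' : Set E} {v : E}
    (hK : ∀ x ∈ K, ∀ t : ℝ, 0 < t → v + t • (x - v) ∈ K)
    (hK' : ∀ x ∈ K', ∀ t : ℝ, 0 < t → v + t • (x - v) ∈ K') (h : K =ᶠ[𝓝 v] K') : K ⊆ K' := by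
  intro x hx
  have hlim : Tendsto (fun t : ℝ => v + t • (x - v)) (𝓝 0) (𝓝 v) := by
    have hcont : Continuous fun t : ℝ => v + t • (x - v) := by fun_prop
    simpa using hcont.tendsto 0
  obtain ⟨t, htK, ht⟩ := ((hlim.eventually h.mem_iff).filter_mono nhdsWithin_le_nhds |>.and
    (self_mem_nhdsWithin (s := Ioi (0 : ℝ)))).exists
  have := hK' _ (htK.1 (hK x hx t ht)) t⁻¹ (inv_pos.2 ht)
  simpa [smul_smul, inv_mul_cancel₀ ht.ne'] using this

lemma eq_zero_or_eq_zero_of_apply_smul_add_smul {E : Type*} [AddCommGroup E] [Module ℝ E]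
    (ℓ : E →ₗ[ℝ] ℝ) {u₁ u₂ : E} {t₁ t₂ : ℝ} (ht₁ : 0 ≤ t₁) (ht₂ : 0 ≤ t₂)
    (hne : t₁ • u₁ + t₂ • u₂ ≠ 0) (h₁ : 0 ≤ ℓ u₁) (h₂ : 0 ≤ ℓ u₂)
    (hℓ : ℓ (t₁ • u₁ + t₂ • u₂) = 0) : ℓ u₁ = 0 ∨ ℓ u₂ = 0 := by
  simp only [map_add, map_smul, smul_eq_mul] at hℓ
  have := mul_nonneg ht₁ h₁
  have := mul_nonneg ht₂ h₂
  rcases ht₁.eq_or_lt with rfl | ht₁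
  · rcases ht₂.eq_or_lt with rfl | ht₂
    · simp at hne
    · exact Or.inr <| (mul_eq_zero.1 (by linarith : t₂ * ℓ u₂ = 0)).resolve_left ht₂.ne'
  · exact Or.inl <| (mul_eq_zero.1 (by linarith : t₁ * ℓ u₁ = 0)).resolve_left ht₁.ne'

def polyhedron {E ι : Type*} [AddCommGroup E] [Module ℝ E] [TopologicalSpace E]
    (f : ι → StrongDual ℝ E) (k : ι → ℝ) : Set E :=
  {x | ∀ i, k i ≤ f i x}

section Polyhedron

variable {E ι : Type*} [AddCommGroup E] [Module ℝ E] [TopologicalSpace E]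
  {f : ι → StrongDual ℝ E} {k : ι → ℝ}

lemma convex_polyhedron : Convex ℝ (polyhedron f k) := by
  simp only [polyhedron, ofPred_forall]
  exact convex_iInter fun i => convex_halfSpace_ge (f i).toLinearMap.isLinear (k i)

lemma isClosed_polyhedron : IsClosed (polyhedron f k) := by
  simp only [polyhedron, ofPred_forall]
  exact isClosed_iInter fun i => isClosed_le continuous_const (f i).continuous

lemma interior_polyhedron_nonempty [Finite ι] {x : E} (hx : ∀ i, k i < f i x) :
    (interior (polyhedron f k)).Nonempty := by
  have hopen : IsOpen {y : E | ∀ i, k i < f i y} := by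
    simp only [ofPred_forall]
    exact isOpen_iInter_of_finite fun i => isOpen_lt continuous_const (f i).continuous
  exact ⟨x, interior_maximal (fun y hy i => (hy i).le) hopen hx⟩

lemma apply_eq_of_mem_openSegment {v x y : E} {i : ι} (hx : x ∈ polyhedron f k)
    (hy : y ∈ polyhedron f k) (hv : v ∈ openSegment ℝ x y) (hi : f i v = k i) :
    f i x = k i ∧ f i y = k i := by
  obtain ⟨a, b, ha, hb, hab, rfl⟩ := hv
  simp only [map_add, map_smul, smul_eq_mul] at hi
  have hsum : a * (f i x - k i) + b * (f i y - k i) = 0 := by linear_combination hi - k i * hab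
  have hx' := mul_nonneg ha.le (sub_nonneg.2 (hx i))
  have hy' := mul_nonneg hb.le (sub_nonneg.2 (hy i))
  constructor
  · linarith [(mul_eq_zero.1 (by linarith : a * (f i x - k i) = 0)).resolve_left ha.ne']
  · linarith [(mul_eq_zero.1 (by linarith : b * (f i y - k i) = 0)).resolve_left hb.ne']

lemma mem_extremePoints_polyhedron {v : E} {i j : ι} (hv : v ∈ polyhedron f k)
    (hi : f i v = k i) (hj : f j v = k j) (huniq : ∀ x, f i x = k i → f j x = k j → x = v) :
    v ∈ (polyhedron f k).extremePoints ℝ := by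
  refine mem_extremePoints.2 ⟨hv, fun x hx y hy hxy => ?_⟩
  obtain ⟨hxi, hyi⟩ := apply_eq_of_mem_openSegment hx hy hxy hi
  obtain ⟨hxj, hyj⟩ := apply_eq_of_mem_openSegment hx hy hxy hj
  exact ⟨huniq x hxi hxj, huniq y hyi hyj⟩

lemma notMem_extremePoints_polyhedron [Finite ι] [IsTopologicalAddGroup E] [ContinuousSMul ℝ E]
    {v d : E} (hv : v ∈ polyhedron f k) (hd : d ≠ 0) (hfd : ∀ i, f i v = k i → f i d = 0) :
    v ∉ (polyhedron f k).extremePoints ℝ := by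
  have hline : ∀ᶠ t in 𝓝 (0 : ℝ), v + t • d ∈ polyhedron f k := by
    refine Filter.eventually_all.2 fun i => ?_
    rcases (hv i).eq_or_lt with hact | hinact
    · exact Filter.Eventually.of_forall fun t => by simp [hfd i hact.symm, ← hact]
    · have hcont : Continuous fun t : ℝ => f i (v + t • d) := by fun_prop
      have hlim : Tendsto (fun t : ℝ => f i (v + t • d)) (𝓝 0) (𝓝 (f i v)) := by
        simpa using hcont.tendsto 0
      exact hlim.eventually (eventually_ge_nhds hinact)
  obtain ⟨t, ⟨hplus, hminus⟩, ht⟩ := ((hline.and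
    ((continuous_neg.tendsto' 0 0 neg_zero).eventually hline)).filter_mono nhdsWithin_le_nhds
    |>.and self_mem_nhdsWithin).exists (f := 𝓝[≠] (0 : ℝ))
  intro hext
  have hmid : v ∈ openSegment ℝ (v + t • d) (v + (-t) • d) :=
    ⟨1 / 2, 1 / 2, by norm_num, by norm_num, by norm_num, by module⟩
  have := (mem_extremePoints.1 hext).2 _ hplus _ hminus hmid
  simp_all

end Polyhedron

lemma volume_setOf_fst_add_snd (s t : Set ℝ) (hs : MeasurableSet s) (ht : MeasurableSet t) :
    volume {x : Plane | x 0 ∈ s ∧ x 0 + x 1 ∈ t} = volume s * volume t := by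
  have hshear : MeasurePreserving (fun x : Plane => (x 0, x 0 + x 1)) :=
    (measurePreserving_prod_add volume volume).comp
      ((volume_preserving_finTwoArrow ℝ).comp (PiLp.volume_preserving_ofLp (Fin 2)))
  calc volume {x : Plane | x 0 ∈ s ∧ x 0 + x 1 ∈ t}
      = volume ((fun x : Plane => (x 0, x 0 + x 1)) ⁻¹' s ×ˢ t) := rfl
    _ = volume s * volume t := by
      rw [hshear.measure_preimage (hs.prod ht).nullMeasurableSet, Measure.volume_eq_prod,
        Measure.prod_prod]

lemma inter_closedBall_eq_of_abs_sub_le {s t : Set Plane} {v : Plane} {ε : ℝ}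
    (h : ∀ x : Plane, |x 0 - v 0| ≤ ε → |x 1 - v 1| ≤ ε → (x ∈ s ↔ x ∈ t)) :
    s ∩ closedBall v ε = t ∩ closedBall v ε := by
  ext x
  refine and_congr_left fun hx => h x ?_ ?_ <;>
    exact (Real.dist_eq _ _ ▸ PiLp.dist_apply_le x v _).trans (mem_closedBall.1 hx)

lemma isCompact_unitSquare : IsCompact unitSquare := by
  convert (PiLp.homeomorph 2 fun _ : Fin 2 => ℝ).isCompact_preimage.2
    (isCompact_Icc (a := 0) (b := 1))
  ext x
  simp only [unitSquare, mem_ofPred_eq, mem_preimage, mem_Icc, Pi.le_def, Pi.zero_apply,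
    Fin.forall_fin_two, Pi.one_apply]
  tauto

def vertexCone (v : Plane) (u₁ u₂ : Fin 2 → ℤ) : Set Plane :=
  {x | ∃ t₁ t₂ : ℝ, 0 ≤ t₁ ∧ 0 ≤ t₂ ∧ x = v + t₁ • vec u₁ + t₂ • vec u₂}

def IsDelzantVertex (Δ : Set Plane) (v : Plane) : Prop :=
  ∃ u₁ u₂ : Fin 2 → ℤ, LinearIndependent ℝ ![vec u₁, vec u₂] ∧
    (u₁ 0 * u₂ 1 - u₁ 1 * u₂ 0 = 1 ∨ u₁ 0 * u₂ 1 - u₁ 1 * u₂ 0 = -1) ∧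
    ∃ ε > (0 : ℝ), Δ ∩ closedBall v ε = vertexCone v u₁ u₂ ∩ closedBall v ε

lemma add_smul_sub_mem_vertexCone {v x : Plane} {u₁ u₂ : Fin 2 → ℤ}
    (hx : x ∈ vertexCone v u₁ u₂) {t : ℝ} (ht : 0 < t) : v + t • (x - v) ∈ vertexCone v u₁ u₂ := by
  obtain ⟨t₁, t₂, ht₁, ht₂, rfl⟩ := hx
  exact ⟨t * t₁, t * t₂, by positivity, by positivity, by module⟩

/-- Cramer's rule for the coordinates of `x - v` in the basis `u₁, u₂`; since the determinant is
`±1`, dividing by it is the same as multiplying by it. -/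
lemma mem_vertexCone_iff {v x : Plane} {u₁ u₂ : Fin 2 → ℤ}
    (hdet : u₁ 0 * u₂ 1 - u₁ 1 * u₂ 0 = 1 ∨ u₁ 0 * u₂ 1 - u₁ 1 * u₂ 0 = -1) :
    x ∈ vertexCone v u₁ u₂ ↔
      0 ≤ (u₁ 0 * u₂ 1 - u₁ 1 * u₂ 0 : ℤ) * ((x 0 - v 0) * u₂ 1 - (x 1 - v 1) * u₂ 0) ∧
      0 ≤ (u₁ 0 * u₂ 1 - u₁ 1 * u₂ 0 : ℤ) * (u₁ 0 * (x 1 - v 1) - u₁ 1 * (x 0 - v 0)) := by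
  have hD : ((u₁ 0 : ℝ) * u₂ 1 - u₁ 1 * u₂ 0) ^ 2 = 1 := by
    rcases hdet with h | h <;> exact_mod_cast (by simp [h] : (u₁ 0 * u₂ 1 - u₁ 1 * u₂ 0) ^ 2 = 1)
  simp only [vertexCone, mem_ofPred_eq]
  push_cast
  constructor
  · rintro ⟨t₁, t₂, ht₁, ht₂, rfl⟩
    simp only [PiLp.add_apply, PiLp.smul_apply, smul_eq_mul, vec]
    constructor
    · convert ht₁ using 1; linear_combination t₁ * hD
    · convert ht₂ using 1; linear_combination t₂ * hD
  · rintro ⟨h₁, h₂⟩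
    refine ⟨_, _, h₁, h₂, ?_⟩
    ext i
    fin_cases i
    · simp only [Fin.zero_eta, vec, PiLp.add_apply, PiLp.smul_apply, smul_eq_mul]
      linear_combination (v 0 - x 0) * hD
    · simp only [Fin.mk_one, vec, PiLp.add_apply, PiLp.smul_apply, smul_eq_mul]
      linear_combination (v 1 - x 1) * hD

lemma linearIndependent_vec {u₁ u₂ : Fin 2 → ℤ} (h : u₁ 0 * u₂ 1 - u₁ 1 * u₂ 0 ≠ 0) :
    LinearIndependent ℝ ![vec u₁, vec u₂] := by
  refine LinearIndependent.pair_iff.2 fun s t hst => ?_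
  have h₀ : s * u₁ 0 + t * u₂ 0 = 0 := by simpa [vec] using congrArg (· 0) hst
  have h₁ : s * u₁ 1 + t * u₂ 1 = 0 := by simpa [vec] using congrArg (· 1) hst
  have hD : ((u₁ 0 : ℝ) * u₂ 1 - u₁ 1 * u₂ 0) ≠ 0 := by exact_mod_cast h
  constructor
  · exact (mul_eq_zero.1 (by linear_combination u₂ 1 * h₀ - u₂ 0 * h₁)).resolve_right hD
  · exact (mul_eq_zero.1 (by linear_combination u₁ 0 * h₁ - u₁ 1 * h₀)).resolve_right hD

lemma isDelzantVertex_of_abs_sub_le {Δ : Set Plane} {v : Plane} {u₁ u₂ : Fin 2 → ℤ} {ε : ℝ}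
    (hdet : u₁ 0 * u₂ 1 - u₁ 1 * u₂ 0 = 1 ∨ u₁ 0 * u₂ 1 - u₁ 1 * u₂ 0 = -1) (hε : 0 < ε)
    (h : ∀ x : Plane, |x 0 - v 0| ≤ ε → |x 1 - v 1| ≤ ε → (x ∈ Δ ↔
      0 ≤ (u₁ 0 * u₂ 1 - u₁ 1 * u₂ 0 : ℤ) * ((x 0 - v 0) * u₂ 1 - (x 1 - v 1) * u₂ 0) ∧
      0 ≤ (u₁ 0 * u₂ 1 - u₁ 1 * u₂ 0 : ℤ) * (u₁ 0 * (x 1 - v 1) - u₁ 1 * (x 0 - v 0)))) :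
    IsDelzantVertex Δ v :=
  ⟨u₁, u₂, linearIndependent_vec (by omega), hdet, ε, hε,
    inter_closedBall_eq_of_abs_sub_le fun x h₀ h₁ => (h x h₀ h₁).trans (mem_vertexCone_iff hdet).symm⟩

/-- `(1, 0)` and `(-1, 2)` span the two edges of the cone `{y₁ ≥ 0, 2y₀ + y₁ ≥ 0}`; a subcone
containing both must have a generator on each edge, and these edges have determinant `2`. -/
lemma two_dvd_det_of_mem_vertexCone {v : Plane} {u₁ u₂ : Fin 2 → ℤ}
    (hu₁ : 0 ≤ u₁ 1 ∧ 0 ≤ 2 * u₁ 0 + u₁ 1) (hu₂ : 0 ≤ u₂ 1 ∧ 0 ≤ 2 * u₂ 0 + u₂ 1)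
    (he₁ : v + vec ![1, 0] ∈ vertexCone v u₁ u₂) (he₂ : v + vec ![-1, 2] ∈ vertexCone v u₁ u₂) :
    2 ∣ u₁ 0 * u₂ 1 - u₁ 1 * u₂ 0 := by
  obtain ⟨a₁, a₂, ha₁, ha₂, ha⟩ := he₁
  obtain ⟨b₁, b₂, hb₁, hb₂, hb⟩ := he₂
  rw [add_assoc, add_right_inj] at ha hb
  have h₁ : u₁ 1 = 0 ∨ u₂ 1 = 0 := by
    have := eq_zero_or_eq_zero_of_apply_smul_add_smul
      (EuclideanSpace.proj 1 : Plane →L[ℝ] ℝ).toLinearMap (u₁ := vec u₁) (u₂ := vec u₂) ha₁ ha₂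
      (by rw [← ha]; exact fun h => by simpa [vec] using congrArg (· 0) h)
      (by simpa [vec] using hu₁.1) (by simpa [vec] using hu₂.1) (by rw [← ha]; simp [vec])
    simpa [vec] using this
  have h₂ : 2 * u₁ 0 + u₁ 1 = 0 ∨ 2 * u₂ 0 + u₂ 1 = 0 := by
    have := eq_zero_or_eq_zero_of_apply_smul_add_smul
      ((2 : ℝ) • EuclideanSpace.proj 0 + EuclideanSpace.proj 1 : Plane →L[ℝ] ℝ).toLinearMap
      (u₁ := vec u₁) (u₂ := vec u₂) hb₁ hb₂
      (by rw [← hb]; exact fun h => by simpa [vec] using congrArg (· 0) h)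
      (by simpa [vec] using (Int.cast_nonneg hu₁.2 : (0 : ℝ) ≤ _))
      (by simpa [vec] using (Int.cast_nonneg hu₂.2 : (0 : ℝ) ≤ _))
      (by rw [← hb]; norm_num [vec])
    simp only [ContinuousLinearMap.toLinearMap_add, ContinuousLinearMap.toLinearMap_smul, vec,
      LinearMap.add_apply, LinearMap.smul_apply, ContinuousLinearMap.coe_coe, PiLp.proj_apply,
      smul_eq_mul] at this
    exact_mod_cast this
  rcases h₁ with h₁ | h₁ <;> rcases h₂ with h₂ | h₂
  · exact ⟨0, by rw [show u₁ 0 = 0 by omega, h₁]; ring⟩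
  · exact ⟨-(u₁ 0 * u₂ 0), by rw [h₁, show u₂ 1 = -2 * u₂ 0 by omega]; ring⟩
  · exact ⟨u₁ 0 * u₂ 0, by rw [h₁, show u₁ 1 = -2 * u₁ 0 by omega]; ring⟩
  · exact ⟨0, by rw [show u₂ 0 = 0 by omega, h₁]; ring⟩

def cutSquare (c b : ℝ) : Set Plane :=
  polyhedron ![EuclideanSpace.proj 0, -EuclideanSpace.proj 0, EuclideanSpace.proj 1,
    -EuclideanSpace.proj 1, 2 • EuclideanSpace.proj 0 + EuclideanSpace.proj 1,
    EuclideanSpace.proj 0 + EuclideanSpace.proj 1] ![0, -1, 0, -1, c, b]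

lemma mem_cutSquare {c b : ℝ} {x : Plane} :
    x ∈ cutSquare c b ↔ 0 ≤ x 0 ∧ x 0 ≤ 1 ∧ 0 ≤ x 1 ∧ x 1 ≤ 1 ∧ c ≤ 2 * x 0 + x 1 ∧
      b ≤ x 0 + x 1 := by
  simp [cutSquare, polyhedron, Fin.forall_fin_succ, neg_le_neg_iff]

lemma cutSquare_subset_cutSquare {c b b' : ℝ} (h : b ≤ b') : cutSquare c b' ⊆ cutSquare c b :=
  fun _ hx => let ⟨h₀, h₁, h₂, h₃, h₄, h₅⟩ := mem_cutSquare.1 hx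
    mem_cutSquare.2 ⟨h₀, h₁, h₂, h₃, h₄, h.trans h₅⟩

lemma cutSquare_subset_unitSquare (c b : ℝ) : cutSquare c b ⊆ unitSquare := fun _ hx =>
  let ⟨h₀, h₁, h₂, h₃, _⟩ := mem_cutSquare.1 hx; ⟨h₀, h₁, h₂, h₃⟩

lemma isCompact_cutSquare (c b : ℝ) : IsCompact (cutSquare c b) :=
  isCompact_unitSquare.of_isClosed_subset isClosed_polyhedron (cutSquare_subset_unitSquare c b)

lemma interior_cutSquare_nonempty {c b : ℝ} (hc : c < 3 / 2) (hb : b < 1) :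
    (interior (cutSquare c b)).Nonempty :=
  interior_polyhedron_nonempty (x := !₂[1 / 2, 1 / 2]) <| by
    norm_num [Fin.forall_fin_succ]
    exact ⟨hc, hb⟩

lemma notMem_extremePoints_cutSquare {c b d₀ d₁ : ℝ} {v : Plane} (hv : v ∈ cutSquare c b)
    (hd : d₀ ≠ 0 ∨ d₁ ≠ 0)
    (hfd : (v 0 = 0 → d₀ = 0) ∧ (v 0 = 1 → d₀ = 0) ∧ (v 1 = 0 → d₁ = 0) ∧ (v 1 = 1 → d₁ = 0) ∧
      (2 * v 0 + v 1 = c → 2 * d₀ + d₁ = 0) ∧ (v 0 + v 1 = b → d₀ + d₁ = 0)) :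
    v ∉ (cutSquare c b).extremePoints ℝ := by
  refine notMem_extremePoints_polyhedron hv (d := !₂[d₀, d₁]) ?_ ?_
  · intro h
    have h₀ : d₀ = 0 := by simpa using congrArg (· 0) h
    have h₁ : d₁ = 0 := by simpa using congrArg (· 1) h
    tauto
  · simpa [Fin.forall_fin_succ] using hfd

lemma eq_vertex_of_mem_extremePoints_cutSquare {c b : ℝ} (hc : c < 1) (hb : c / 2 < b)
    (hbc : b < c) {v : Plane} (hv : v ∈ (cutSquare c b).extremePoints ℝ) :
    (v 0 = 0 ∧ v 1 = c) ∨ (v 0 = 0 ∧ v 1 = 1) ∨ (v 0 = 1 ∧ v 1 = 0) ∨ (v 0 = 1 ∧ v 1 = 1) ∨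
      (v 0 = b ∧ v 1 = 0) ∨ (v 0 = c - b ∧ v 1 = 2 * b - c) := by
  obtain ⟨h₀, h₁, h₂, h₃, h₄, h₅⟩ := mem_cutSquare.1 hv.1
  -- At any other point, some direction `d` keeps every active constraint active.
  have hmove := fun (d₀ d₁ : ℝ) hd hfd =>
    notMem_extremePoints_cutSquare (d₀ := d₀) (d₁ := d₁) hv.1 hd hfd hv
  rcases h₀.eq_or_lt with hp | hp
  · rcases (show c ≤ v 1 by linarith).eq_or_lt with hq | hq
    · exact Or.inl ⟨hp.symm, hq.symm⟩
    rcases h₃.eq_or_lt with hq' | hq'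
    · exact Or.inr <| Or.inl ⟨hp.symm, hq'⟩
    exact (hmove 0 1 (by norm_num) (by and_intros <;> intro <;> linarith)).elim
  rcases h₁.eq_or_lt with hp' | hp'
  · rcases h₂.eq_or_lt with hq | hq
    · exact Or.inr <| Or.inr <| Or.inl ⟨hp', hq.symm⟩
    rcases h₃.eq_or_lt with hq' | hq'
    · exact Or.inr <| Or.inr <| Or.inr <| Or.inl ⟨hp', hq'⟩
    exact (hmove 0 1 (by norm_num) (by and_intros <;> intro <;> linarith)).elim
  rcases h₂.eq_or_lt with hq | hq
  · rcases (show b ≤ v 0 by linarith).eq_or_lt with hp'' | hp''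
    · exact Or.inr <| Or.inr <| Or.inr <| Or.inr <| Or.inl ⟨hp''.symm, hq.symm⟩
    exact (hmove 1 0 (by norm_num) (by and_intros <;> intro <;> linarith)).elim
  rcases h₃.eq_or_lt with hq' | hq'
  · exact (hmove 1 0 (by norm_num) (by and_intros <;> intro <;> linarith)).elim
  rcases h₄.eq_or_lt with hl | hl <;> rcases h₅.eq_or_lt with hl' | hl'
  · exact Or.inr <| Or.inr <| Or.inr <| Or.inr <| Or.inr ⟨by linarith, by linarith⟩
  · exact (hmove 1 (-2) (by norm_num) (by and_intros <;> intro <;> linarith)).elim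
  · exact (hmove 1 (-1) (by norm_num) (by and_intros <;> intro <;> linarith)).elim
  · exact (hmove 1 0 (by norm_num) (by and_intros <;> intro <;> linarith)).elim

lemma isDelzant_cutSquare {c b : ℝ} (hc : c < 1) (hb : c / 2 < b) (hbc : b < c) :
    IsDelzant (cutSquare c b) := by
  refine ⟨isCompact_cutSquare c b, convex_polyhedron,
    Measure.measure_pos_of_nonempty_interior _
      (interior_cutSquare_nonempty (by linarith) (by linarith)), fun v hv => ?_⟩
  -- Within distance `m / 4` of a vertex only the two constraints through it can be active.
  set m := min (min (2 * b - c) (c - b)) (1 - c)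
  have hm : 0 < m := lt_min (lt_min (by linarith) (by linarith)) (by linarith)
  have hm₁ : m ≤ 2 * b - c := (min_le_left _ _).trans (min_le_left _ _)
  have hm₂ : m ≤ c - b := (min_le_left _ _).trans (min_le_right _ _)
  have hm₃ : m ≤ 1 - c := min_le_right _ _
  have hε : 0 < m / 4 := by positivity
  rcases eq_vertex_of_mem_extremePoints_cutSquare hc hb hbc hv with
    ⟨h₀, h₁⟩ | ⟨h₀, h₁⟩ | ⟨h₀, h₁⟩ | ⟨h₀, h₁⟩ | ⟨h₀, h₁⟩ | ⟨h₀, h₁⟩ <;>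
  [refine isDelzantVertex_of_abs_sub_le (u₁ := ![0, 1]) (u₂ := ![1, -2]) (by norm_num) hε ?_;
   refine isDelzantVertex_of_abs_sub_le (u₁ := ![1, 0]) (u₂ := ![0, -1]) (by norm_num) hε ?_;
   refine isDelzantVertex_of_abs_sub_le (u₁ := ![-1, 0]) (u₂ := ![0, 1]) (by norm_num) hε ?_;
   refine isDelzantVertex_of_abs_sub_le (u₁ := ![-1, 0]) (u₂ := ![0, -1]) (by norm_num) hε ?_;
   refine isDelzantVertex_of_abs_sub_le (u₁ := ![1, 0]) (u₂ := ![-1, 1]) (by norm_num) hε ?_;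
   refine isDelzantVertex_of_abs_sub_le (u₁ := ![-1, 2]) (u₂ := ![1, -1]) (by norm_num) hε ?_] <;>
  intro x hx₀ hx₁ <;>
  rw [h₀, abs_le] at hx₀ <;>
  rw [h₁, abs_le] at hx₁ <;>
  simp only [mem_cutSquare, h₀, h₁, Matrix.cons_val_zero, Matrix.cons_val_one,
    Matrix.cons_val_fin_one] <;>
  push_cast <;>
  constructor <;> intro h <;> casesm* _ ∧ _ <;> and_intros <;> linarith

lemma not_isDelzantVertex_cutSquare_half {c : ℝ} (hc₀ : 0 < c) (hc₁ : c < 1) :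
    ¬ IsDelzantVertex (cutSquare c (c / 2)) !₂[c / 2, 0] := by
  rintro ⟨u₁, u₂, -, hdet, ε, hε, hloc⟩
  set v : Plane := !₂[c / 2, 0]
  set H : Set Plane := {x | 0 ≤ x 1 ∧ c ≤ 2 * x 0 + x 1}
  -- The constraint `c / 2 ≤ x₀ + x₁` is also active at `v`, but it is implied by the two in `H`.
  have hHL : H ∩ closedBall v (c / 4) = cutSquare c (c / 2) ∩ closedBall v (c / 4) :=
    inter_closedBall_eq_of_abs_sub_le fun x h₀ h₁ => by
      simp only [H, v, mem_cutSquare, mem_ofPred_eq, abs_le, Matrix.cons_val_zero,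
        Matrix.cons_val_one, Matrix.cons_val_fin_one] at h₀ h₁ ⊢
      constructor <;> intro h <;> casesm* _ ∧ _ <;> and_intros <;> linarith
  have hH : ∀ x ∈ H, ∀ t : ℝ, 0 < t → v + t • (x - v) ∈ H := by
    rintro x ⟨h₁, h₂⟩ t ht
    simp only [H, v, mem_ofPred_eq, PiLp.add_apply, PiLp.sub_apply, PiLp.smul_apply, smul_eq_mul,
      Matrix.cons_val_zero, Matrix.cons_val_one, Matrix.cons_val_fin_one]
    constructor <;> nlinarith
  have hlocal := (eventuallyEq_of_inter_closedBall_eq (by positivity) hHL).trans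
    (eventuallyEq_of_inter_closedBall_eq hε hloc)
  have hHC : H = vertexCone v u₁ u₂ :=
    (subset_of_eventuallyEq_of_cone hH (fun x hx t ht => add_smul_sub_mem_vertexCone hx ht)
      hlocal).antisymm
    (subset_of_eventuallyEq_of_cone (fun x hx t ht => add_smul_sub_mem_vertexCone hx ht) hH
      hlocal.symm)
  have hgen : ∀ u : Fin 2 → ℤ, v + vec u ∈ H → 0 ≤ u 1 ∧ 0 ≤ 2 * u 0 + u 1 := by
    intro u ⟨h₁, h₂⟩
    simp only [v, vec, PiLp.add_apply, Matrix.cons_val_zero, Matrix.cons_val_one,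
      Matrix.cons_val_fin_one, zero_add, Int.cast_nonneg_iff] at h₁ h₂
    constructor <;> [exact_mod_cast h₁; exact_mod_cast (by linarith : (0 : ℝ) ≤ 2 * u 0 + u 1)]
  have hdvd := two_dvd_det_of_mem_vertexCone
    (hgen u₁ (hHC ▸ ⟨1, 0, zero_le_one, le_rfl, by simp⟩))
    (hgen u₂ (hHC ▸ ⟨0, 1, le_rfl, zero_le_one, by simp⟩))
    (by rw [← hHC]; norm_num [H, v, vec, mul_add, mul_div_cancel₀])
    (by rw [← hHC]; norm_num [H, v, vec, mul_add, mul_div_cancel₀])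
  omega

lemma not_isDelzant_cutSquare_half {c : ℝ} (hc₀ : 0 < c) (hc₁ : c < 1) :
    ¬ IsDelzant (cutSquare c (c / 2)) := by
  refine fun h => not_isDelzantVertex_cutSquare_half hc₀ hc₁ (h.2.2.2 _ ?_)
  -- Constraints `2` and `4` of `cutSquare` are `0 ≤ x₁` and `c ≤ 2 * x₀ + x₁`.
  refine mem_extremePoints_polyhedron (i := 2) (j := 4)
    (mem_cutSquare.2 ?_) (by simp) (by simp [mul_div_cancel₀]) fun x h₁ h₂ => ?_
  · simp only [Matrix.cons_val_zero, Matrix.cons_val_one, Matrix.cons_val_fin_one]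
    refine ⟨?_, ?_, ?_, ?_, ?_, ?_⟩ <;> linarith
  · simp only [Matrix.cons_val, PiLp.proj_apply, add_apply, smul_apply, nsmul_eq_mul,
      Nat.cast_ofNat] at h₁ h₂
    ext i
    fin_cases i
    · simp only [Fin.zero_eta, Matrix.cons_val_zero]; linarith
    · simp only [Fin.mk_one, Matrix.cons_val_one, Matrix.cons_val_fin_one]; linarith

lemma volume_parallelogram {c : ℝ} (hc : 0 ≤ c) (p q : ℝ) :
    volume {x : Plane | x 0 ∈ Icc 0 c ∧ x 0 + x 1 ∈ Icc p q} = ENNReal.ofReal (c * (q - p)) := by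
  rw [volume_setOf_fst_add_snd _ _ measurableSet_Icc measurableSet_Icc, Real.volume_Icc,
    Real.volume_Icc, sub_zero, ENNReal.ofReal_mul hc]

lemma volume_symmDiff_cutSquare_le {c b b' : ℝ} (hc : 0 ≤ c) (hbb' : b ≤ b') (hb' : b' ≤ c) :
    volume (cutSquare c b ∆ cutSquare c b') ≤ ENNReal.ofReal (c * (b' - b)) := by
  rw [symmDiff_of_ge (cutSquare_subset_cutSquare hbb'), ← volume_parallelogram hc]
  refine measure_mono fun x ⟨hx, hx'⟩ => ?_
  obtain ⟨h₀, h₁, h₂, h₃, h₄, h₅⟩ := mem_cutSquare.1 hx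
  have h₆ : x 0 + x 1 < b' := lt_of_not_ge fun h => hx' (mem_cutSquare.2 ⟨h₀, h₁, h₂, h₃, h₄, h⟩)
  exact ⟨⟨h₀, by linarith⟩, h₅, h₆.le⟩

lemma volume_symmDiff_unitSquare_le {c b : ℝ} (hc : 0 ≤ c) (hbc : b ≤ c) :
    volume (cutSquare c b ∆ unitSquare) ≤ ENNReal.ofReal (c * c) := by
  have hpar := volume_parallelogram hc 0 c
  rw [sub_zero] at hpar
  rw [symmDiff_of_le (cutSquare_subset_unitSquare c b), ← hpar]
  refine measure_mono fun x ⟨⟨h₀, h₁, h₂, h₃⟩, hx'⟩ => ?_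
  have h₄ : x 0 + x 1 < c ∧ x 0 < c := by
    rcases le_or_gt c (2 * x 0 + x 1) with h₄ | h₄ <;> rcases le_or_gt b (x 0 + x 1) with h₅ | h₅
    · exact (hx' (mem_cutSquare.2 ⟨h₀, h₁, h₂, h₃, h₄, h₅⟩)).elim
    all_goals constructor <;> linarith
  exact ⟨⟨h₀, h₄.2.le⟩, by linarith, h₄.1.le⟩

lemma tendsto_volume_symmDiff_cutSquare {ι : Type*} {l : Filter ι} {c b₀ : ℝ} {b : ι → ℝ}
    (hc : 0 ≤ c) (hb₀ : ∀ i, b₀ ≤ b i) (hbc : ∀ i, b i ≤ c) (hb : Tendsto b l (𝓝 b₀)) :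
    Tendsto (fun i => volume (cutSquare c (b i) ∆ cutSquare c b₀)) l (𝓝 0) := by
  have hbound : Tendsto (fun i => ENNReal.ofReal (c * (b i - b₀))) l (𝓝 0) := by
    simpa using ENNReal.tendsto_ofReal ((hb.sub_const b₀).const_mul c)
  refine tendsto_of_tendsto_of_tendsto_of_le_of_le tendsto_const_nhds hbound (fun _ => zero_le)
    fun i => ?_
  rw [symmDiff_comm]
  exact volume_symmDiff_cutSquare_le hc (hb₀ i) (hbc i)

/-- The space of Delzant polygons with the symmetric-difference metric is not locally
compact: arbitrarily close to the unit square there are Cauchy sequences of Delzant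
polygons without any subsequence converging to a Delzant polygon. -/
theorem delzant_not_locallyCompact (ε : ℝ) (hε : 0 < ε) :
    ∃ Δseq : ℕ → Set Plane,
      (∀ n, IsDelzant (Δseq n)) ∧
      (∀ n, volume (symmDiff (Δseq n) unitSquare) ≤ ENNReal.ofReal ε) ∧
      (∀ δ : ℝ, 0 < δ → ∃ N : ℕ, ∀ m n : ℕ, N ≤ m → N ≤ n →
        volume (symmDiff (Δseq m) (Δseq n)) < ENNReal.ofReal δ) ∧
      ¬ ∃ (φ : ℕ → ℕ) (Δ : Set Plane), StrictMono φ ∧ IsDelzant Δ ∧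
          Tendsto (fun k => volume (symmDiff (Δseq (φ k)) Δ)) atTop (nhds 0) := by
  set c := min ε (1 / 2)
  have hc₀ : 0 < c := lt_min hε one_half_pos
  have hc₁ : c ≤ 1 / 2 := min_le_right _ _
  set b : ℕ → ℝ := fun n => c / 2 + c / 4 * (1 / 2) ^ n
  have hb : ∀ n, c / 2 < b n ∧ b n < c := fun n => by
    have h₁ : (0 : ℝ) < (1 / 2) ^ n := by positivity
    have h₂ : (1 / 2 : ℝ) ^ n ≤ 1 := pow_le_one₀ (by norm_num) (by norm_num)
    simp only [b]
    constructor <;> nlinarith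
  have hlim : Tendsto (fun n => volume (cutSquare c (b n) ∆ cutSquare c (c / 2))) atTop (𝓝 0) :=
    tendsto_volume_symmDiff_cutSquare hc₀.le (fun n => (hb n).1.le) (fun n => (hb n).2.le) <| by
      have := (tendsto_pow_atTop_nhds_zero_of_lt_one (by norm_num : (0 : ℝ) ≤ 1 / 2)
        (by norm_num)).const_mul (c / 4) |>.const_add (c / 2)
      rwa [mul_zero, add_zero] at this
  refine ⟨fun n => cutSquare c (b n), fun n => isDelzant_cutSquare (by linarith) (hb n).1 (hb n).2,
    fun n => (volume_symmDiff_unitSquare_le hc₀.le (hb n).2.le).trans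
      (ENNReal.ofReal_le_ofReal (by nlinarith [min_le_left ε (1 / 2)])),
    fun δ hδ => exists_forall_measure_symmDiff_lt_of_tendsto hlim (ENNReal.ofReal_pos.2 hδ), ?_⟩
  rintro ⟨φ, Δ, hφ, hΔ, hΔlim⟩
  have hL : cutSquare c (c / 2) = Δ :=
    Convex.eq_of_measure_symmDiff_eq_zero convex_polyhedron hΔ.2.1 isClosed_polyhedron
      hΔ.1.isClosed (interior_cutSquare_nonempty (by linarith) (by linarith))
      (Convex.interior_nonempty_of_measure_pos hΔ.2.1 hΔ.2.2.1)
      (measure_symmDiff_eq_zero_of_tendsto (hlim.comp hφ.tendsto_atTop) hΔlim)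
  exact not_isDelzant_cutSquare_half hc₀ (by linarith) (hL ▸ hΔ)
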